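/- Let B ∈ M_{n×m}(ℝ) be a non-zero matrix whose columns are linearly independent, and let W ∈ M_{m×m}(ℝ) be a diagonal matrix with strictly positive diagonal entries w₁,…,w_m. Then B·W·Bᵀ has exactly m non-zero eigenvalues counted with multiplicity, all of them positive, and its smallest non-zero eigenvalue λ_min satisfies λ_min ≤ min_{1≤j≤m} w_j · (Bᵀ·B)_{jj}. -/

import Mathlib

/-!
Write `A = B W Bᵀ = C Cᵀ` with `C = B W^{1/2}`. Then `A` is positive semidefinite of rank
`rank C = rank B = m`, so its `m` non-zero eigenvalues are positive. The Gram matrix `Cᵀ C` is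
positive definite, and every non-zero eigenvalue of `Cᵀ C` is one of `C Cᵀ` (if
`Cᵀ C u = μ u` then `C Cᵀ (C u) = μ C u`). Its smallest eigenvalue `μ` is therefore a
non-zero eigenvalue of `A`, and `μ ≤ (Cᵀ C)_{jj} = w_j (Bᵀ B)_{jj}` because `Cᵀ C - μ I`
is positive semidefinite.
-/

open Matrix

namespace Matrix

theorem IsHermitian.posSemidef_sub_algebraMap {ι : Type*} [Fintype ι] [DecidableEq ι]
    {A : Matrix ι ι ℝ} (hA : A.IsHermitian) {r : ℝ} (hr : ∀ i, r ≤ hA.eigenvalues i) :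
    (A - algebraMap ℝ _ r).PosSemidef := by
  refine posSemidef_iff_isHermitian_and_spectrum_nonneg.mpr
    ⟨hA.sub (isHermitian_diagonal _), ?_⟩
  rw [← spectrum.sub_singleton_eq, hA.spectrum_real_eq_range_eigenvalues]
  rintro _ ⟨_, ⟨i, rfl⟩, _, rfl, rfl⟩
  exact sub_nonneg.mpr (hr i)

theorem IsHermitian.eigenvalues_le_apply_self {ι : Type*} [Fintype ι] [DecidableEq ι]
    {A : Matrix ι ι ℝ} (hA : A.IsHermitian) {k : ι}
    (hk : ∀ i, hA.eigenvalues k ≤ hA.eigenvalues i) (j : ι) : hA.eigenvalues k ≤ A j j := by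
  simpa [algebraMap_eq_diagonal, sub_nonneg] using
    (hA.posSemidef_sub_algebraMap hk).diag_nonneg (i := j)

theorem mem_spectrum_mul_comm_of_ne_zero {K m n : Type*} [Field K] [Fintype m] [Fintype n]
    [DecidableEq m] [DecidableEq n] (A : Matrix m n K) (B : Matrix n m K) {μ : K} (hμ : μ ≠ 0)
    (h : μ ∈ spectrum K (B * A)) : μ ∈ spectrum K (A * B) := by
  rw [← spectrum_toLin', ← Module.End.hasEigenvalue_iff_mem_spectrum] at h ⊢
  obtain ⟨v, hv, hv0⟩ := h.exists_hasEigenvector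
  rw [Module.End.mem_eigenspace_iff, toLin'_apply] at hv
  refine Module.End.hasEigenvalue_of_hasEigenvector (x := A *ᵥ v) ⟨?_, fun hAv => ?_⟩
  · rw [Module.End.mem_eigenspace_iff, toLin'_apply, ← mulVec_mulVec, mulVec_mulVec _ B A, hv,
      mulVec_smul]
  · rw [← mulVec_mulVec, hAv, mulVec_zero, eq_comm, smul_eq_zero] at hv
    exact hv.elim hμ hv0

section WeightedGram

variable {m n : Type*} [Fintype m] [DecidableEq m] {w : m → ℝ}

theorem isUnit_det_diagonal_sqrt (hw : ∀ j, 0 < w j) :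
    IsUnit (diagonal fun j => √(w j)).det := by
  rw [det_diagonal]
  exact (Finset.prod_pos fun j _ => Real.sqrt_pos.mpr (hw j)).ne'.isUnit

theorem mul_diagonal_sqrt_mul_transpose (B : Matrix n m ℝ) (hw : ∀ j, 0 ≤ w j) :
    B * diagonal (fun j => √(w j)) * (B * diagonal fun j => √(w j))ᵀ =
      B * diagonal w * Bᵀ := by
  rw [transpose_mul, diagonal_transpose, Matrix.mul_assoc, ← Matrix.mul_assoc (diagonal _),
    diagonal_mul_diagonal, ← Matrix.mul_assoc]
  simp only [Real.mul_self_sqrt (hw _)]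

theorem rank_mul_diagonal_mul_transpose [Fintype n] (B : Matrix n m ℝ) (hw : ∀ j, 0 < w j) :
    (B * diagonal w * Bᵀ).rank = B.rank := by
  rw [← mul_diagonal_sqrt_mul_transpose B fun j => (hw j).le, rank_self_mul_transpose,
    rank_mul_eq_left_of_isUnit_det _ _ (isUnit_det_diagonal_sqrt hw)]

theorem exists_eigenvalues_ne_zero_le_mul_diag [Fintype n] [DecidableEq n] {B : Matrix n m ℝ}
    (hB : Function.Injective B.mulVec) (hw : ∀ j, 0 < w j)
    (hA : (B * diagonal w * Bᵀ).IsHermitian) (j : m) :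
    ∃ i, hA.eigenvalues i ≠ 0 ∧ hA.eigenvalues i ≤ w j * (Bᵀ * B) j j := by
  set C := B * diagonal fun j => √(w j)
  have hC : Function.Injective C.mulVec := by
    have := hB.comp (mulVec_injective_of_det_ne_zero (isUnit_det_diagonal_sqrt hw).ne_zero)
    simpa only [Function.comp_def, mulVec_mulVec] using this
  have hM : (Cᵀ * C).PosDef := PosDef.conjTranspose_mul_self C hC
  obtain ⟨k, -, hk⟩ :=
    Finset.univ.exists_min_image hM.isHermitian.eigenvalues ⟨j, Finset.mem_univ j⟩
  have hspec : hM.isHermitian.eigenvalues k ∈ spectrum ℝ (B * diagonal w * Bᵀ) := by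
    rw [← mul_diagonal_sqrt_mul_transpose B fun j => (hw j).le]
    exact mem_spectrum_mul_comm_of_ne_zero _ _ (hM.eigenvalues_pos k).ne'
      (hM.isHermitian.eigenvalues_mem_spectrum_real k)
  obtain ⟨i, hi⟩ := hA.spectrum_real_eq_range_eigenvalues ▸ hspec
  refine ⟨i, hi ▸ (hM.eigenvalues_pos k).ne', ?_⟩
  calc hA.eigenvalues i = hM.isHermitian.eigenvalues k := hi
    _ ≤ (Cᵀ * C) j j :=
      hM.isHermitian.eigenvalues_le_apply_self (fun l => hk l (Finset.mem_univ l)) j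
    _ = w j * (Bᵀ * B) j j := by
      rw [transpose_mul, diagonal_transpose, Matrix.mul_assoc, ← Matrix.mul_assoc Bᵀ,
        ← Matrix.mul_assoc, mul_diagonal, diagonal_mul, mul_comm, ← mul_assoc,
        Real.mul_self_sqrt (hw j).le]

end WeightedGram

end Matrix

theorem stmt12 {n m : ℕ} (B : Matrix (Fin n) (Fin m) ℝ)
    (hind : LinearIndependent ℝ (fun j : Fin m => fun i : Fin n => B i j))
    (w : Fin m → ℝ) (hw : ∀ j, 0 < w j)
    (W : Matrix (Fin m) (Fin m) ℝ) (hW : W = Matrix.diagonal w)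
    (hA : (B * W * B.transpose).IsHermitian) :
    (Finset.univ.filter fun i : Fin n => hA.eigenvalues i ≠ 0).card = m ∧
    (∀ i : Fin n, hA.eigenvalues i ≠ 0 → 0 < hA.eigenvalues i) ∧
    (∀ i : Fin n, (hA.eigenvalues i ≠ 0 ∧
        ∀ i' : Fin n, hA.eigenvalues i' ≠ 0 → hA.eigenvalues i ≤ hA.eigenvalues i') →
      ∀ j : Fin m, hA.eigenvalues i ≤ w j * (B.transpose * B) j j) := by
  subst hW
  have hPSD : (B * diagonal w * Bᵀ).PosSemidef :=
    (posSemidef_diagonal_iff.mpr fun j => (hw j).le).mul_mul_conjTranspose_same B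
  refine ⟨?_, fun i hi => (hPSD.eigenvalues_nonneg i).lt_of_ne' hi, ?_⟩
  · rw [← Fintype.card_subtype, ← hA.rank_eq_card_non_zero_eigs,
      rank_mul_diagonal_mul_transpose B hw, ← rank_transpose]
    exact hind.rank_matrix.trans (Fintype.card_fin m)
  · rintro i ⟨-, hmin⟩ j
    obtain ⟨i', hi'0, hi'⟩ :=
      exists_eigenvalues_ne_zero_le_mul_diag (mulVec_injective_iff.mpr hind) hw hA j
    exact (hmin i' hi'0).trans hi'
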